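/- arXiv:2107.04450 — 5 statements merged into one kernel-verified Lean document; each statement's English description precedes it below -/
import Mathlib

section
/- Let u : ℝ^d → ℝ be four times continuously differentiable and let x ∈ ℝ^d and M ≥ 0 satisfy ‖D⁴u(z)‖ ≤ M for every z in the closed ball of radius δ centered at x. Then the nonlocal Laplacian satisfies the second-order pointwise consistency estimate |ℒ_δ u(x) − Δu(x)| ≤ (d·M/12)·δ², where Δu(x) denotes the classical Laplacian (the trace of the Hessian of u at x). -/
/-!
Taylor's theorem along the segments from `x` to `x ± h` gives
`u (x + h) + u (x - h) - 2 u x = D²u(x)(h, h) + r(h)` with `|r(h)| ≤ M ‖h‖⁴ / 12`, the odd-order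
terms cancelling. Substituting `y = x ± h` turns `ℒ_δ u(x)` into the integral of this symmetric
second difference against `γ ‖h‖`. Coordinate reflections and permutations are isometries, so the
second moments `∫ hᵢ hⱼ γ(‖h‖) dh` vanish off the diagonal and, by the normalisation, equal `1`
on it; hence the quadratic term integrates to the Laplacian, and the remainder to at most
`(M / 12) δ² ∫ ‖h‖² γ(‖h‖) dh = d M δ² / 12`.
-/

open MeasureTheory Set

section Taylor

variable {F : Type*} [NormedAddCommGroup F] [NormedSpace ℝ F]

theorem iteratedDeriv_comp_add_smul {G : Type*} [NormedAddCommGroup G] [NormedSpace ℝ G]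
    {n : WithTop ℕ∞} {u : F → G} (hu : ContDiff ℝ n u) (x v : F) {k : ℕ} (hk : k ≤ n) (t : ℝ) :
    iteratedDeriv k (fun s : ℝ => u (x + s • v)) t
      = iteratedFDeriv ℝ k u (x + t • v) (fun _ => v) := by
  have hline : (fun s : ℝ => u (x + s • v))
      = (fun z => u (x + z)) ∘ ContinuousLinearMap.toSpanSingleton ℝ v := rfl
  have hshift : ContDiff ℝ n (fun z => u (x + z)) := hu.comp (contDiff_const.add contDiff_id)
  rw [hline, iteratedDeriv_eq_iteratedFDeriv,
    ContinuousLinearMap.iteratedFDeriv_comp_right _ hshift _ hk,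
    ContinuousMultilinearMap.compContinuousLinearMap_apply, iteratedFDeriv_comp_add_left]
  simp

theorem abs_sub_taylor_le {u : F → ℝ} {n : ℕ} (hu : ContDiff ℝ (n + 1) u) (x v : F) {M : ℝ}
    (hM : ∀ z ∈ segment ℝ x (x + v), ‖iteratedFDeriv ℝ (n + 1) u z‖ ≤ M) :
    |u (x + v) - ∑ k ∈ Finset.range (n + 1), iteratedFDeriv ℝ k u x (fun _ => v) / k.factorial|
      ≤ M * ‖v‖ ^ (n + 1) / (n + 1).factorial := by
  set g : ℝ → ℝ := fun t => u (x + t • v)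
  have hg : ContDiff ℝ (n + 1) g := hu.comp (contDiff_const.add (contDiff_id.smul contDiff_const))
  obtain ⟨ξ, hξ, hrem⟩ := taylor_mean_remainder_lagrange_iteratedDeriv zero_ne_one hg.contDiffOn
  rw [uIoo_of_le zero_le_one] at hξ
  have hpoly : taylorWithinEval g n (uIcc 0 1) 0 1
      = ∑ k ∈ Finset.range (n + 1), iteratedFDeriv ℝ k u x (fun _ => v) / k.factorial := by
    rw [taylor_within_apply]
    refine Finset.sum_congr rfl fun k hk => ?_
    have hkn : (k : WithTop ℕ∞) ≤ n + 1 := by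
      exact_mod_cast (Finset.mem_range.mp hk).le
    rw [iteratedDerivWithin_eq_iteratedDeriv (uniqueDiffOn_uIcc zero_ne_one)
      (hg.contDiffAt.of_le hkn) left_mem_uIcc,
      iteratedDeriv_comp_add_smul hu x v hkn]
    simp [div_eq_inv_mul]
  have hseg : x + ξ • v ∈ segment ℝ x (x + v) := by
    rw [segment_eq_image']
    exact ⟨ξ, Ioo_subset_Icc_self hξ, by simp⟩
  have hbound : |iteratedFDeriv ℝ (n + 1) u (x + ξ • v) (fun _ => v)| ≤ M * ‖v‖ ^ (n + 1) := by
    simpa using ContinuousMultilinearMap.le_of_opNorm_le (hM _ hseg) (fun _ => v)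
  rw [← hpoly, show u (x + v) = g 1 by simp [g], hrem,
    iteratedDeriv_comp_add_smul hu x v le_rfl]
  simp only [sub_zero, one_pow, mul_one, abs_div, Nat.abs_cast]
  gcongr

theorem abs_second_difference_sub_le {u : F → ℝ} (hu : ContDiff ℝ 4 u) (x v : F) {M : ℝ}
    (hM : ∀ z ∈ Metric.closedBall x ‖v‖, ‖iteratedFDeriv ℝ 4 u z‖ ≤ M) :
    |u (x + v) + u (x - v) - 2 * u x - iteratedFDeriv ℝ 2 u x (fun _ => v)|
      ≤ M / 12 * ‖v‖ ^ 4 := by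
  have hseg : ∀ w : F, ‖w‖ = ‖v‖ → segment ℝ x (x + w) ⊆ Metric.closedBall x ‖v‖ := fun w hw =>
    (convex_closedBall x ‖v‖).segment_subset (Metric.mem_closedBall_self (norm_nonneg v))
      (by simp [hw])
  have hplus := abs_sub_taylor_le (n := 3) hu x v fun z hz => hM z (hseg v rfl hz)
  have hminus := abs_sub_taylor_le (n := 3) hu x (-v) fun z hz => hM z (hseg (-v) (norm_neg v) hz)
  have hneg : ∀ k : ℕ, iteratedFDeriv ℝ k u x (fun _ => -v)
      = (-1) ^ k * iteratedFDeriv ℝ k u x (fun _ => v) := fun k => by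
    simpa using (iteratedFDeriv ℝ k u x).map_smul_univ (fun _ => (-1 : ℝ)) (fun _ => v)
  simp only [Finset.sum_range_succ, Finset.sum_range_zero, hneg, norm_neg, ← sub_eq_add_neg]
    at hplus hminus
  norm_num [Nat.factorial, iteratedFDeriv_zero_apply] at hplus hminus
  rw [abs_le] at hplus hminus ⊢
  constructor <;> linarith

theorem abs_second_difference_sub_le_of_norm_le {u : F → ℝ} (hu : ContDiff ℝ 4 u) {x v : F}
    {δ M : ℝ} (hM₀ : 0 ≤ M) (hM : ∀ z ∈ Metric.closedBall x δ, ‖iteratedFDeriv ℝ 4 u z‖ ≤ M)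
    (hv : ‖v‖ ≤ δ) :
    |u (x + v) + u (x - v) - 2 * u x - iteratedFDeriv ℝ 2 u x (fun _ => v)|
      ≤ M / 12 * δ ^ 2 * ‖v‖ ^ 2 :=
  calc _ ≤ M / 12 * ‖v‖ ^ 4 := abs_second_difference_sub_le hu x v fun z hz =>
          hM z (Metric.closedBall_subset_closedBall hv hz)
    _ = M / 12 * ‖v‖ ^ 2 * ‖v‖ ^ 2 := by ring
    _ ≤ _ := by gcongr

end Taylor

section RadialKernel

theorem integrable_mul_radial_of_continuous {E : Type*} [NormedAddCommGroup E] [ProperSpace E]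
    [MeasurableSpace E] [BorelSpace E] {μ : Measure E} {γ : ℝ → ℝ} {δ : ℝ}
    (hγ : Integrable (fun h : E => γ ‖h‖) μ) (hsupp : ∀ r, δ ≤ r → γ r = 0) {G : E → ℝ}
    (hG : Continuous G) : Integrable (fun h => G h * γ ‖h‖) μ := by
  obtain ⟨C, hC⟩ := (isCompact_closedBall (0 : E) δ).exists_bound_of_continuousOn hG.continuousOn
  refine (hγ.norm.const_mul C).mono' (hG.aestronglyMeasurable.mul hγ.aestronglyMeasurable)
    (ae_of_all _ fun h => ?_)
  rw [norm_mul]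
  by_cases hh : ‖h‖ < δ
  · exact mul_le_mul_of_nonneg_right (hC h (by simpa using hh.le)) (norm_nonneg _)
  · simp [hsupp _ (not_lt.mp hh)]

variable {E : Type*} [NormedAddCommGroup E] [InnerProductSpace ℝ E] [FiniteDimensional ℝ E]
  [MeasurableSpace E] [BorelSpace E] {γ : ℝ → ℝ} {δ : ℝ}

theorem integral_comp_linearIsometryEquiv_mul_radial (e : E ≃ₗᵢ[ℝ] E) (f : E → ℝ) :
    ∫ h, f (e h) * γ ‖h‖ = ∫ h, f h * γ ‖h‖ := by
  simpa only [e.norm_map] using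
    e.measurePreserving.integral_comp e.toHomeomorph.measurableEmbedding (fun h => f h * γ ‖h‖)

theorem two_mul_integral_sub_mul_radial (hγ : Integrable (fun h : E => γ ‖h‖))
    (hsupp : ∀ r, δ ≤ r → γ r = 0) {u : E → ℝ} (hu : Continuous u) (x : E) :
    2 * ∫ y, (u y - u x) * γ ‖y - x‖ = ∫ h, (u (x + h) + u (x - h) - 2 * u x) * γ ‖h‖ := by
  have htranslate : ∫ y, (u y - u x) * γ ‖y - x‖ = ∫ h, (u (x + h) - u x) * γ ‖h‖ := by
    simpa using (integral_add_left_eq_self (fun y => (u y - u x) * γ ‖y - x‖) x).symm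
  have hreflect : ∫ h, (u (x - h) - u x) * γ ‖h‖ = ∫ h, (u (x + h) - u x) * γ ‖h‖ := by
    simpa [sub_eq_add_neg] using integral_comp_linearIsometryEquiv_mul_radial
      (LinearIsometryEquiv.neg ℝ) (fun h => u (x + h) - u x)
  have hint : ∀ s : E → E, Continuous s → Integrable (fun h => (u (s h) - u x) * γ ‖h‖) :=
    fun s hs => integrable_mul_radial_of_continuous hγ hsupp ((hu.comp hs).sub continuous_const)
  rw [htranslate, two_mul]
  nth_rw 1 [← hreflect]
  rw [← integral_add (hint _ (by fun_prop)) (hint _ (by fun_prop))]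
  congr with h
  ring

end RadialKernel

section SecondMoments

variable {ι : Type*} [Fintype ι] {γ : ℝ → ℝ} {δ : ℝ}

theorem integral_coord_mul_coord_mul_radial_of_ne [DecidableEq ι] {i j : ι} (hij : i ≠ j) :
    ∫ h : EuclideanSpace ℝ ι, h i * h j * γ ‖h‖ = 0 := by
  let reflect := LinearIsometryEquiv.piLpCongrRight 2 fun k : ι =>
    if k = j then LinearIsometryEquiv.neg ℝ else LinearIsometryEquiv.refl ℝ ℝ
  have hreflect := integral_comp_linearIsometryEquiv_mul_radial (γ := γ) reflect
    (fun h => h i * h j)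
  simp only [reflect, LinearIsometryEquiv.piLpCongrRight_apply, hij, if_true, if_false,
    LinearIsometryEquiv.coe_neg, LinearIsometryEquiv.coe_refl, id, mul_neg, neg_mul,
    integral_neg] at hreflect
  linarith

theorem integral_coord_mul_self_mul_radial_eq [DecidableEq ι] (i j : ι) :
    ∫ h : EuclideanSpace ℝ ι, h i * h i * γ ‖h‖ = ∫ h : EuclideanSpace ℝ ι, h j * h j * γ ‖h‖ := by
  simpa using integral_comp_linearIsometryEquiv_mul_radial (γ := γ)
    (LinearIsometryEquiv.piLpCongrLeft 2 ℝ ℝ (Equiv.swap i j)) (fun h => h j * h j)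

theorem integral_coord_mul_self_mul_radial (hγ : Integrable (fun h : EuclideanSpace ℝ ι => γ ‖h‖))
    (hsupp : ∀ r, δ ≤ r → γ r = 0) (i : ι) :
    ∫ h : EuclideanSpace ℝ ι, h i * h i * γ ‖h‖
      = (∫ h : EuclideanSpace ℝ ι, ‖h‖ ^ 2 * γ ‖h‖) / Fintype.card ι := by
  classical
  have hcard : (Fintype.card ι : ℝ) ≠ 0 := by
    have : Nonempty ι := ⟨i⟩
    exact Nat.cast_ne_zero.mpr Fintype.card_ne_zero
  rw [eq_div_iff hcard]
  calc _ = ∑ j, ∫ h : EuclideanSpace ℝ ι, h j * h j * γ ‖h‖ := by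
        rw [Finset.sum_congr rfl fun j _ => integral_coord_mul_self_mul_radial_eq j i,
          Finset.sum_const, Finset.card_univ, nsmul_eq_mul, mul_comm]
    _ = ∫ h : EuclideanSpace ℝ ι, ∑ j, h j * h j * γ ‖h‖ := (integral_finsetSum _ fun j _ =>
        integrable_mul_radial_of_continuous hγ hsupp (by fun_prop)).symm
    _ = _ := by
        congr with h
        rw [← Finset.sum_mul, EuclideanSpace.real_norm_sq_eq]
        simp [sq]

theorem ContinuousMultilinearMap.map_const_eq_sum_single [DecidableEq ι]
    (B : ContinuousMultilinearMap ℝ (fun _ : Fin 2 => EuclideanSpace ℝ ι) ℝ)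
    (h : EuclideanSpace ℝ ι) :
    B (fun _ => h) = ∑ i, ∑ j, h i * h j *
      B ![EuclideanSpace.single i 1, EuclideanSpace.single j 1] := by
  have hbasis : h = ∑ j, h j • EuclideanSpace.single j (1 : ℝ) := by
    simpa using ((EuclideanSpace.basisFun ι ℝ).sum_repr h).symm
  conv_lhs => rw [hbasis, B.map_sum]
  rw [← (piFinTwoEquiv fun _ => ι).symm.sum_comp, Fintype.sum_prod_type]
  refine Finset.sum_congr rfl fun i _ => Finset.sum_congr rfl fun j _ => ?_
  rw [B.map_smul_univ, Fin.prod_univ_two, smul_eq_mul]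
  congr 2
  funext k
  fin_cases k <;> rfl

theorem integral_quadratic_mul_radial [DecidableEq ι]
    (hγ : Integrable (fun h : EuclideanSpace ℝ ι => γ ‖h‖)) (hsupp : ∀ r, δ ≤ r → γ r = 0)
    (B : ContinuousMultilinearMap ℝ (fun _ : Fin 2 => EuclideanSpace ℝ ι) ℝ) :
    ∫ h : EuclideanSpace ℝ ι, B (fun _ => h) * γ ‖h‖
      = (∫ h : EuclideanSpace ℝ ι, ‖h‖ ^ 2 * γ ‖h‖) / Fintype.card ι *
        ∑ i, B ![EuclideanSpace.single i 1, EuclideanSpace.single i 1] := by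
  have hint : ∀ i j, Integrable (fun h : EuclideanSpace ℝ ι => h i * h j * γ ‖h‖) :=
    fun i j => integrable_mul_radial_of_continuous hγ hsupp (by fun_prop)
  calc _ = ∫ h : EuclideanSpace ℝ ι, ∑ i, ∑ j, h i * h j * γ ‖h‖ *
        B ![EuclideanSpace.single i 1, EuclideanSpace.single j 1] := by
        congr with h
        simp only [B.map_const_eq_sum_single, Finset.sum_mul, mul_right_comm _ _ (γ ‖h‖)]
    _ = ∑ i, ∑ j, (∫ h : EuclideanSpace ℝ ι, h i * h j * γ ‖h‖) *
        B ![EuclideanSpace.single i 1, EuclideanSpace.single j 1] := by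
        rw [integral_finsetSum _ fun i _ => integrable_finsetSum _ fun j _ =>
          (hint i j).mul_const _]
        congr with i
        rw [integral_finsetSum _ fun j _ => (hint i j).mul_const _]
        simp only [integral_mul_const]
    _ = ∑ i, (∫ h : EuclideanSpace ℝ ι, h i * h i * γ ‖h‖) *
        B ![EuclideanSpace.single i 1, EuclideanSpace.single i 1] := by
        congr with i
        refine Finset.sum_eq_single i (fun j _ hji => ?_) (by simp)
        rw [integral_coord_mul_coord_mul_radial_of_ne hji.symm, zero_mul]
    _ = _ := by
        simp only [integral_coord_mul_self_mul_radial hγ hsupp, Finset.mul_sum]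

end SecondMoments

theorem nonlocal_laplacian_pointwise_consistency_general
    (d : ℕ) (hd : 1 ≤ d) (δ : ℝ)
    (γ : ℝ → ℝ) (hγ_nonneg : ∀ r, 0 ≤ γ r)
    (hγ_supp : ∀ r, δ ≤ r → γ r = 0)
    (hγ_int : Integrable (fun h : EuclideanSpace ℝ (Fin d) => γ ‖h‖))
    (hγ_norm : (∫ h : EuclideanSpace ℝ (Fin d), γ ‖h‖ * ‖h‖ ^ 2) = (d : ℝ))
    (u : EuclideanSpace ℝ (Fin d) → ℝ) (hu : ContDiff ℝ 4 u)
    (x : EuclideanSpace ℝ (Fin d)) (M : ℝ) (hM : 0 ≤ M)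
    (hDu : ∀ z ∈ Metric.closedBall x δ, ‖iteratedFDeriv ℝ 4 u z‖ ≤ M) :
    |(2 * ∫ y, (u y - u x) * γ ‖y - x‖) -
        ∑ i : Fin d, iteratedFDeriv ℝ 2 u x
          ![EuclideanSpace.single i 1, EuclideanSpace.single i 1]| ≤
      d * M / 12 * δ ^ 2 := by
  set D2 := iteratedFDeriv ℝ 2 u x
  have hint : ∀ G : EuclideanSpace ℝ (Fin d) → ℝ, Continuous G →
      Integrable (fun h => G h * γ ‖h‖) := fun _ =>
    integrable_mul_radial_of_continuous hγ_int hγ_supp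
  have hmoment : ∫ h : EuclideanSpace ℝ (Fin d), ‖h‖ ^ 2 * γ ‖h‖ = d := by
    simpa only [mul_comm] using hγ_norm
  have hlaplacian : ∫ h, D2 (fun _ => h) * γ ‖h‖
      = ∑ i : Fin d, D2 ![EuclideanSpace.single i 1, EuclideanSpace.single i 1] := by
    rw [integral_quadratic_mul_radial hγ_int hγ_supp, hmoment, Fintype.card_fin,
      div_self (by positivity), one_mul]
  have hpointwise : ∀ h : EuclideanSpace ℝ (Fin d),
      ‖(u (x + h) + u (x - h) - 2 * u x) * γ ‖h‖ - D2 (fun _ => h) * γ ‖h‖‖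
        ≤ M / 12 * δ ^ 2 * (‖h‖ ^ 2 * γ ‖h‖) := by
    intro h
    rcases le_or_gt δ ‖h‖ with hfar | hnear
    · simp [hγ_supp _ hfar]
    rw [← sub_mul, norm_mul, Real.norm_of_nonneg (hγ_nonneg _), ← mul_assoc]
    exact mul_le_mul_of_nonneg_right
      (abs_second_difference_sub_le_of_norm_le hu hM hDu hnear.le) (hγ_nonneg _)
  rw [two_mul_integral_sub_mul_radial hγ_int hγ_supp hu.continuous x, ← hlaplacian,
    ← integral_sub (hint _ (by fun_prop)) (hint _ (by fun_prop))]
  calc _ ≤ ∫ h, M / 12 * δ ^ 2 * (‖h‖ ^ 2 * γ ‖h‖) :=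
        norm_integral_le_of_norm_le ((hint _ (by fun_prop)).const_mul _) (ae_of_all _ hpointwise)
    _ = _ := by rw [integral_const_mul, hmoment]; ring

/-- Second-order pointwise consistency of the nonlocal Laplacian with the
classical Laplacian (trace of the Hessian). -/
theorem nonlocal_laplacian_pointwise_consistency
    (d : ℕ) (hd : 1 ≤ d) (δ : ℝ) (hδ : 0 < δ)
    (γ : ℝ → ℝ) (hγ_meas : Measurable γ) (hγ_nonneg : ∀ r, 0 ≤ γ r)
    (hγ_supp : ∀ r, δ ≤ r → γ r = 0)
    (hγ_int : Integrable (fun h : EuclideanSpace ℝ (Fin d) => γ ‖h‖))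
    (hγ_norm : (∫ h : EuclideanSpace ℝ (Fin d), γ ‖h‖ * ‖h‖ ^ 2) = (d : ℝ))
    (u : EuclideanSpace ℝ (Fin d) → ℝ) (hu : ContDiff ℝ 4 u)
    (x : EuclideanSpace ℝ (Fin d)) (M : ℝ) (hM : 0 ≤ M)
    (hDu : ∀ z ∈ Metric.closedBall x δ, ‖iteratedFDeriv ℝ 4 u z‖ ≤ M) :
    |(2 * ∫ y, (u y - u x) * γ ‖y - x‖) -
        ∑ i : Fin d, iteratedFDeriv ℝ 2 u x
          ![EuclideanSpace.single i 1, EuclideanSpace.single i 1]| ≤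
      d * M / 12 * δ ^ 2 :=
  nonlocal_laplacian_pointwise_consistency_general d hd δ γ hγ_nonneg hγ_supp hγ_int hγ_norm u hu x
    M hM hDu
end

section
/- Let u : ℝ^d → ℝ^d be affine, u(x) = A x + b with A a linear map on ℝ^d and b ∈ ℝ^d. Then for every x ∈ ℝ^d the nonlocal dilatation equals θu(x) = (2/d) · tr(A); in particular the dilatation of an affine displacement field is constant and, for d = 2, equals the divergence of u. -/
/-!
The integrand depends on `y` only through `h = y - x`, where it becomes `γ ‖h‖ ⟪h, A h⟫`. So
everything reduces to the second-moment form `(v, w) ↦ ∫ γ ‖h‖ ⟪v, h⟫ ⟪w, h⟫` of the radial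
weight. It is invariant under linear isometries; a reflection fixing `w` and negating `v ⊥ w`
makes it vanish off the diagonal, and a reflection exchanging two unit vectors makes it constant on
unit vectors. By Parseval that constant is `m / d`, and expanding `⟪h, A h⟫` in an orthonormal
basis gives `∫ γ ‖h‖ ⟪h, A h⟫ = (m / d) tr A`.
-/

open MeasureTheory Module Submodule
open scoped RealInnerProductSpace

noncomputable section

variable {E : Type*} [NormedAddCommGroup E] [InnerProductSpace ℝ E]

theorem inner_self_map_eq_sum {ι : Type*} [Fintype ι] (b : OrthonormalBasis ι ℝ E)
    (A : E →ₗ[ℝ] E) (h : E) :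
    ⟪h, A h⟫ = ∑ i, ∑ j, ⟪b i, A (b j)⟫ * (⟪b i, h⟫ * ⟪b j, h⟫) := by
  conv_lhs => rw [← b.sum_repr' h]
  simp only [map_sum, map_smul, sum_inner, inner_sum, inner_smul_left, inner_smul_right,
    conj_trivial, Finset.mul_sum]
  rw [Finset.sum_comm]
  refine Finset.sum_congr rfl fun i _ => Finset.sum_congr rfl fun j _ => ?_
  ring

variable [FiniteDimensional ℝ E] [MeasurableSpace E] [BorelSpace E] (f : ℝ → ℝ)

def radialSecondMoment (v w : E) : ℝ :=
  ∫ h, f ‖h‖ * (⟪v, h⟫ * ⟪w, h⟫)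

theorem radialSecondMoment_map (e : E ≃ₗᵢ[ℝ] E) (v w : E) :
    radialSecondMoment f (e v) (e w) = radialSecondMoment f v w := by
  unfold radialSecondMoment
  rw [← e.measurePreserving.integral_comp e.toHomeomorph.measurableEmbedding]
  simp only [LinearIsometryEquiv.norm_map, LinearIsometryEquiv.inner_map_map]

theorem radialSecondMoment_neg_left (v w : E) :
    radialSecondMoment f (-v) w = -radialSecondMoment f v w := by
  simp only [radialSecondMoment, inner_neg_left, neg_mul, mul_neg, integral_neg]

theorem radialSecondMoment_eq_zero_of_inner_eq_zero {v w : E} (hvw : ⟪v, w⟫ = 0) :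
    radialSecondMoment f v w = 0 := by
  have hv : reflection (ℝ ∙ v)ᗮ v = -v := reflection_orthogonalComplement_singleton_eq_neg v
  have hw : reflection (ℝ ∙ v)ᗮ w = w :=
    reflection_mem_subspace_eq_self (mem_orthogonal_singleton_iff_inner_right.mpr hvw)
  have := radialSecondMoment_map f (reflection (ℝ ∙ v)ᗮ) v w
  rw [hv, hw, radialSecondMoment_neg_left] at this
  linarith

theorem radialSecondMoment_self_eq_of_norm_eq {v w : E} (hvw : ‖v‖ = ‖w‖) :
    radialSecondMoment f v v = radialSecondMoment f w w := by
  simpa only [reflection_sub hvw] using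
    (radialSecondMoment_map f (reflection (ℝ ∙ (v - w))ᗮ) v v).symm

variable {f}

theorem integrable_radial_mul_inner_mul_inner (hf : Measurable f)
    (hint : Integrable fun h : E => f ‖h‖ * ‖h‖ ^ 2) (v w : E) :
    Integrable fun h : E => f ‖h‖ * (⟪v, h⟫ * ⟪w, h⟫) := by
  refine (hint.norm.const_mul (‖v‖ * ‖w‖)).mono' (by fun_prop) (ae_of_all _ fun h => ?_)
  have hinner : |⟪v, h⟫ * ⟪w, h⟫| ≤ ‖v‖ * ‖w‖ * ‖h‖ ^ 2 := by
    rw [abs_mul]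
    calc |⟪v, h⟫| * |⟪w, h⟫| ≤ (‖v‖ * ‖h‖) * (‖w‖ * ‖h‖) :=
          mul_le_mul (abs_real_inner_le_norm v h) (abs_real_inner_le_norm w h) (abs_nonneg _)
            (by positivity)
      _ = ‖v‖ * ‖w‖ * ‖h‖ ^ 2 := by ring
  calc ‖f ‖h‖ * (⟪v, h⟫ * ⟪w, h⟫)‖ = |f ‖h‖| * |⟪v, h⟫ * ⟪w, h⟫| := by
        rw [Real.norm_eq_abs, abs_mul]
    _ ≤ |f ‖h‖| * (‖v‖ * ‖w‖ * ‖h‖ ^ 2) := by gcongr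
    _ = ‖v‖ * ‖w‖ * ‖f ‖h‖ * ‖h‖ ^ 2‖ := by
        rw [Real.norm_eq_abs, abs_mul, abs_of_nonneg (by positivity : (0 : ℝ) ≤ ‖h‖ ^ 2)]
        ring

theorem sum_radialSecondMoment_self {ι : Type*} [Fintype ι] (b : OrthonormalBasis ι ℝ E)
    (hf : Measurable f) (hint : Integrable fun h : E => f ‖h‖ * ‖h‖ ^ 2) :
    ∑ i, radialSecondMoment f (b i) (b i) = ∫ h : E, f ‖h‖ * ‖h‖ ^ 2 := by
  unfold radialSecondMoment
  rw [← integral_finsetSum _ fun i _ => integrable_radial_mul_inner_mul_inner hf hint _ _]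
  congr with h
  rw [← b.sum_sq_inner_right h, Finset.mul_sum]
  simp only [sq]

theorem radialSecondMoment_self_of_norm_eq_one (hf : Measurable f)
    (hint : Integrable fun h : E => f ‖h‖ * ‖h‖ ^ 2) {v : E} (hv : ‖v‖ = 1) :
    radialSecondMoment f v v = (∫ h : E, f ‖h‖ * ‖h‖ ^ 2) / finrank ℝ E := by
  have : Nontrivial E := nontrivial_of_ne v 0 (norm_ne_zero_iff.mp (hv ▸ one_ne_zero))
  set b := stdOrthonormalBasis ℝ E
  have hb : ∀ i, radialSecondMoment f (b i) (b i) = radialSecondMoment f v v := fun i =>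
    radialSecondMoment_self_eq_of_norm_eq f (by rw [b.norm_eq_one, hv])
  rw [← sum_radialSecondMoment_self b hf hint, Finset.sum_congr rfl fun i _ => hb i]
  simp only [Finset.sum_const, Finset.card_univ, Fintype.card_fin, nsmul_eq_mul]
  field_simp [(finrank_pos : 0 < finrank ℝ E).ne']

theorem integral_radial_mul_inner_self_map (hf : Measurable f)
    (hint : Integrable fun h : E => f ‖h‖ * ‖h‖ ^ 2) (A : E →ₗ[ℝ] E) :
    ∫ h, f ‖h‖ * ⟪h, A h⟫ = (∫ h : E, f ‖h‖ * ‖h‖ ^ 2) / finrank ℝ E * LinearMap.trace ℝ E A := by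
  set b := stdOrthonormalBasis ℝ E
  set c := (∫ h : E, f ‖h‖ * ‖h‖ ^ 2) / finrank ℝ E
  have hint' : ∀ i j, Integrable fun h : E => ⟪b i, A (b j)⟫ * (f ‖h‖ * (⟪b i, h⟫ * ⟪b j, h⟫)) :=
    fun i j => (integrable_radial_mul_inner_mul_inner hf hint _ _).const_mul _
  calc ∫ h, f ‖h‖ * ⟪h, A h⟫
      = ∫ h, ∑ i, ∑ j, ⟪b i, A (b j)⟫ * (f ‖h‖ * (⟪b i, h⟫ * ⟪b j, h⟫)) := by
        congr with h
        simp only [inner_self_map_eq_sum b, Finset.mul_sum]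
        exact Finset.sum_congr rfl fun i _ => Finset.sum_congr rfl fun j _ => mul_left_comm _ _ _
    _ = ∑ i, ∑ j, ⟪b i, A (b j)⟫ * radialSecondMoment f (b i) (b j) := by
        rw [integral_finsetSum _ fun i _ => integrable_finsetSum _ fun j _ => hint' i j]
        congr with i
        rw [integral_finsetSum _ fun j _ => hint' i j]
        congr with j
        exact integral_const_mul _ _
    _ = ∑ i, ⟪b i, A (b i)⟫ * c := by
        refine Finset.sum_congr rfl fun i _ => ?_
        rw [Finset.sum_eq_single_of_mem i (Finset.mem_univ i) fun j _ hji =>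
          by rw [radialSecondMoment_eq_zero_of_inner_eq_zero f (b.orthonormal.2 hji.symm), mul_zero],
          radialSecondMoment_self_of_norm_eq_one hf hint (b.norm_eq_one i)]
    _ = c * LinearMap.trace ℝ E A := by
        rw [LinearMap.trace_eq_sum_inner A b, ← Finset.sum_mul, mul_comm]

end

theorem dilatation_of_affine_general
    (d : ℕ)
    (γ : ℝ → ℝ) (hγ_meas : Measurable γ)
    (m : ℝ) (hm : 0 < m)
    (hm_def : (∫ h : EuclideanSpace ℝ (Fin d), γ ‖h‖ * ‖h‖ ^ 2) = m)
    (A : EuclideanSpace ℝ (Fin d) →ₗ[ℝ] EuclideanSpace ℝ (Fin d))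
    (b : EuclideanSpace ℝ (Fin d))
    (u : EuclideanSpace ℝ (Fin d) → EuclideanSpace ℝ (Fin d))
    (hu : ∀ x, u x = A x + b)
    (x : EuclideanSpace ℝ (Fin d)) :
    (2 / m) * (∫ y, γ ‖y - x‖ * ⟪y - x, u y - u x⟫) =
      (2 / d) * LinearMap.trace ℝ (EuclideanSpace ℝ (Fin d)) A := by
  -- A non-integrable function has Bochner integral `0`, so `m ≠ 0` forces integrability.
  have hint : Integrable fun h : EuclideanSpace ℝ (Fin d) => γ ‖h‖ * ‖h‖ ^ 2 :=
    Integrable.of_integral_ne_zero (hm_def ▸ hm.ne')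
  have hincr : ∀ y, u y - u x = A (y - x) := fun y => by
    rw [hu, hu, map_sub, add_sub_add_right_eq_sub]
  simp only [hincr]
  rw [integral_sub_right_eq_self (fun h => γ ‖h‖ * ⟪h, A h⟫) x,
    integral_radial_mul_inner_self_map hγ_meas hint, hm_def, finrank_euclideanSpace_fin]
  field_simp

/-- The nonlocal dilatation of an affine displacement field `u(x) = A x + b` equals
`(2/d) · tr(A)` at every point. -/
theorem dilatation_of_affine
    (d : ℕ) (hd : 1 ≤ d) (δ : ℝ) (hδ : 0 < δ)
    (γ : ℝ → ℝ) (hγ_meas : Measurable γ) (hγ_nonneg : ∀ r, 0 ≤ γ r)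
    (hγ_supp : ∀ r, δ ≤ r → γ r = 0)
    (hγ_int : Integrable (fun h : EuclideanSpace ℝ (Fin d) => γ ‖h‖))
    (m : ℝ) (hm : 0 < m)
    (hm_def : (∫ h : EuclideanSpace ℝ (Fin d), γ ‖h‖ * ‖h‖ ^ 2) = m)
    (A : EuclideanSpace ℝ (Fin d) →ₗ[ℝ] EuclideanSpace ℝ (Fin d))
    (b : EuclideanSpace ℝ (Fin d))
    (u : EuclideanSpace ℝ (Fin d) → EuclideanSpace ℝ (Fin d))
    (hu : ∀ x, u x = A x + b)
    (x : EuclideanSpace ℝ (Fin d)) :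
    (2 / m) * (∫ y, γ ‖y - x‖ * ⟪y - x, u y - u x⟫) =
      (2 / d) * LinearMap.trace ℝ (EuclideanSpace ℝ (Fin d)) A :=
  dilatation_of_affine_general d γ hγ_meas m hm hm_def A b u hu x
end

section
/- (Linear patch test for the LPS operator.) Let u : ℝ² → ℝ² be affine, u(x) = A x + b with A a linear map on ℝ² and b ∈ ℝ². Then ℒ^{LPS}u(x) = 0 for every x ∈ ℝ², i.e. the linear peridynamic solid operator applied over the whole space annihilates affine displacement fields, in agreement with its local (Navier) limit. -/
open MeasureTheory
open scoped RealInnerProductSpace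


private lemma odd_integral_zero {E : Type*} [NormedAddCommGroup E] [NormedSpace ℝ E]
    (G : EuclideanSpace ℝ (Fin 2) → E) (hG : ∀ h, G (-h) = -G h) :
    (∫ h, G h) = 0 := by
  have h1 : (∫ h, G (-h)) = ∫ h, G h := integral_neg_eq_self G volume
  simp only [hG, integral_neg] at h1
  have h3 : (2 : ℝ) • (∫ h, G h) = 0 := by
    rw [two_smul]; nth_rewrite 1 [← h1]; abel
  simpa using (smul_eq_zero.mp h3).resolve_left (by norm_num)

/-- Linear patch test for the LPS operator: the whole-space linear peridynamic solid
operator (with `C₁ = 2`, `C₂ = 16` in dimension 2) annihilates affine displacement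
fields `u(x) = A x + b`. -/
theorem lps_linear_patch_test
    (δ : ℝ) (hδ : 0 < δ) (lam mu : ℝ)
    (γ : ℝ → ℝ) (hγ_meas : Measurable γ) (hγ_nonneg : ∀ r, 0 ≤ γ r)
    (hγ_supp : ∀ r, δ ≤ r → γ r = 0)
    (hγ_int : Integrable (fun h : EuclideanSpace ℝ (Fin 2) => γ ‖h‖))
    (m : ℝ) (hm : 0 < m)
    (hm_def : (∫ h : EuclideanSpace ℝ (Fin 2), γ ‖h‖ * ‖h‖ ^ 2) = m)
    (A : EuclideanSpace ℝ (Fin 2) →ₗ[ℝ] EuclideanSpace ℝ (Fin 2))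
    (b : EuclideanSpace ℝ (Fin 2))
    (u : EuclideanSpace ℝ (Fin 2) → EuclideanSpace ℝ (Fin 2))
    (hu : ∀ x, u x = A x + b)
    (θ : EuclideanSpace ℝ (Fin 2) → ℝ)
    (hθ : ∀ p, θ p = (2 / m) * ∫ y, γ ‖y - p‖ * ⟪y - p, u y - u p⟫)
    (x : EuclideanSpace ℝ (Fin 2)) :
    ((2 * (lam - mu)) / m) • (∫ y, (γ ‖y - x‖ * (θ x + θ y)) • (y - x)) +
      ((16 * mu) / m) •
        (∫ y, (γ ‖y - x‖ * (⟪y - x, u y - u x⟫ / ‖y - x‖ ^ 2)) • (y - x)) = 0 := by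
  have key : ∀ p y : EuclideanSpace ℝ (Fin 2), u y - u p = A (y - p) := by
    intro p y; rw [hu, hu, map_sub]; abel
  set c : ℝ := ∫ h : EuclideanSpace ℝ (Fin 2), γ ‖h‖ * ⟪h, A h⟫ with hc
  have hθ' : ∀ p, θ p = (2 / m) * c := by
    intro p
    rw [hθ, hc]
    congr 1
    calc (∫ y, γ ‖y - p‖ * ⟪y - p, u y - u p⟫)
        = ∫ y, (fun h : EuclideanSpace ℝ (Fin 2) => γ ‖h‖ * ⟪h, A h⟫) (y - p) := by
          simp_rw [key]
      _ = _ := integral_sub_right_eq_self (fun h : EuclideanSpace ℝ (Fin 2) => γ ‖h‖ * ⟪h, A h⟫) p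
  have hI1 : (∫ y, (γ ‖y - x‖ * (θ x + θ y)) • (y - x)) = 0 := by
    simp_rw [hθ']
    set G : EuclideanSpace ℝ (Fin 2) → EuclideanSpace ℝ (Fin 2) :=
      fun h => (γ ‖h‖ * (2 / m * c + 2 / m * c)) • h with hG
    show (∫ y, G (y - x)) = 0
    rw [integral_sub_right_eq_self G x]
    exact odd_integral_zero G (fun h => by simp [hG, smul_neg])
  have hI2 : (∫ y, (γ ‖y - x‖ * (⟪y - x, u y - u x⟫ / ‖y - x‖ ^ 2)) • (y - x)) = 0 := by
    simp_rw [key]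
    set G : EuclideanSpace ℝ (Fin 2) → EuclideanSpace ℝ (Fin 2) :=
      fun h => (γ ‖h‖ * (⟪h, A h⟫ / ‖h‖ ^ 2)) • h with hG
    show (∫ y, G (y - x)) = 0
    rw [integral_sub_right_eq_self G x]
    exact odd_integral_zero G (fun h => by simp [hG, map_neg, inner_neg_neg, smul_neg])
  rw [hI1, hI2]
  simp
end

section
/- (LPS first Green identity, eq. (2.11).) For every u, z ∈ L²(Ω̄; ℝ²) that are essentially bounded on Ω̄, the identity ∫_{Ω̄} (−ℒ^{LPS}u)(x) · z(x) dx = a^{LPS}(u, z) holds, where ℒ^{LPS} is the LPS operator with integration domain D = Ω̄. In particular, for z vanishing a.e. on Ω_I, ∫_Ω (−ℒ^{LPS}u) · z dx = a^{LPS}(u, z), so strong solutions of the volume-constrained LPS problem are weak solutions. -/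
/-!
The LPS operator is `ℒu(x) = ∫ T(x, y) dy` for a kernel `T` that is antisymmetric under
`x ↔ y`, so Fubini and the change of variables `(x, y) ↦ (y, x)` give
`∫∫ ⟪T(x, y), z x⟫ = -½ ∫∫ ⟪T(x, y), z y - z x⟫`. For the dilatation part of `T`,
`(θ x + θ y) γ(|y - x|) (y - x)`, the pairing with `z y - z x` is symmetric apart from the factor
`θ x + θ y`, so it integrates to `2 ∫ θ D_z`; the bond part produces the double integral of
`a^{LPS}` directly.

All integrands on `Ω̄ × Ω̄` are integrable because `u`, `z` and hence `θ` are essentially bounded,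
`Ω̄` has finite measure, and by translation invariance `∫ |γ(|y - x|)| (1 + |y - x|) dy` is bounded
by `(1 + δ) ∫ |γ(|h|)| dh`. The singular factor `⟪h, v⟫ / ‖h‖² • h` of the bond part is the
orthogonal projection of `v` onto `ℝ h`, hence bounded by `‖v‖`.
-/

open MeasureTheory
open scoped RealInnerProductSpace ENNReal

section Symmetrization

variable {α E : Type*} [MeasurableSpace α] {μ : Measure α}
  [NormedAddCommGroup E] [InnerProductSpace ℝ E]

theorem MeasureTheory.Integrable.inner_of_top_right {f w : α → E} (hf : Integrable f μ)
    (hw : MemLp w ⊤ μ) : Integrable (fun x => ⟪f x, w x⟫) μ := by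
  rw [← memLp_one_iff_integrable] at hf ⊢
  refine hf.of_bilin (fun a b => ⟪a, b⟫) 1 hw (hf.1.inner hw.1) (ae_of_all _ fun x => ?_)
  simpa using nnnorm_inner_le_nnnorm (𝕜 := ℝ) (f x) (w x)

variable [SFinite μ]

theorem integral_add_mul_of_swap_eq {θ : α → ℝ} {S : α × α → ℝ} (hS : ∀ p, S p.swap = S p)
    (hθS : Integrable (fun p => θ p.1 * S p) (μ.prod μ)) :
    ∫ p, (θ p.1 + θ p.2) * S p ∂μ.prod μ = 2 * ∫ x, θ x * ∫ y, S (x, y) ∂μ ∂μ := by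
  have hswap : ∫ p, θ p.2 * S p ∂μ.prod μ = ∫ p, θ p.1 * S p ∂μ.prod μ := by
    simpa [hS] using integral_prod_swap (μ := μ) (ν := μ) fun p => θ p.1 * S p
  have hθS' : Integrable (fun p => θ p.2 * S p) (μ.prod μ) := by
    simpa [Function.comp_def, hS] using hθS.swap
  simp_rw [add_mul]
  rw [integral_add hθS hθS', hswap, integral_prod _ hθS, two_mul]
  simp_rw [integral_const_mul]

theorem integral_inner_integral_of_swap_eq_neg [CompleteSpace E] [IsFiniteMeasure μ]
    {T : α × α → E} (hTs : ∀ p, T p.swap = -T p) (hT : Integrable T (μ.prod μ)) {w : α → E}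
    (hw : MemLp w ⊤ μ) :
    ∫ x, ⟪∫ y, T (x, y) ∂μ, w x⟫ ∂μ = -(∫ p, ⟪T p, w p.2 - w p.1⟫ ∂μ.prod μ) / 2 := by
  have h₁ : Integrable (fun p => ⟪T p, w p.1⟫) (μ.prod μ) := hT.inner_of_top_right (hw.comp_fst μ)
  have h₂ : Integrable (fun p => ⟪T p, w p.2⟫) (μ.prod μ) := hT.inner_of_top_right (hw.comp_snd μ)
  have hswap : ∫ p, ⟪T p, w p.2⟫ ∂μ.prod μ = -∫ p, ⟪T p, w p.1⟫ ∂μ.prod μ := by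
    rw [← integral_prod_swap (μ := μ) (ν := μ) fun p => ⟪T p, w p.1⟫]
    simp [hTs, integral_neg]
  have hfubini : ∫ x, ⟪∫ y, T (x, y) ∂μ, w x⟫ ∂μ = ∫ p, ⟪T p, w p.1⟫ ∂μ.prod μ := by
    rw [integral_prod _ h₁]
    refine integral_congr_ae ?_
    filter_upwards [hT.prod_right_ae] with x hx
    rw [real_inner_comm, ← integral_inner hx (w x)]
    simp_rw [real_inner_comm (w x)]
  simp_rw [inner_sub_right]
  rw [hfubini, integral_sub h₂ h₁, hswap]
  ring

end Symmetrization

section TranslationKernel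

variable {G F : Type*} [AddGroup G] [MeasurableSpace G] [MeasurableAdd₂ G]
  {μ : Measure G} [μ.IsAddRightInvariant] [NormedAddCommGroup F] {g : G → F}

theorem integral_norm_comp_sub_restrict_le (hg : Integrable g μ) (s : Set G) (x : G) :
    ∫ y in s, ‖g (y - x)‖ ∂μ ≤ ∫ h, ‖g h‖ ∂μ :=
  (setIntegral_le_integral (hg.norm.comp_sub_right x)
    (ae_of_all _ fun _ => norm_nonneg _)).trans_eq (integral_sub_right_eq_self (‖g ·‖) x)

theorem integrable_comp_sub_prod_restrict [MeasurableNeg G] [SFinite μ] [μ.IsAddLeftInvariant]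
    [NormedSpace ℝ F] (hg : Integrable g μ) {s : Set G} (hs : μ s ≠ ∞) :
    Integrable (fun p : G × G => g (p.2 - p.1)) ((μ.restrict s).prod (μ.restrict s)) := by
  have : IsFiniteMeasure (μ.restrict s) := isFiniteMeasure_restrict.2 hs
  have hsub : Measure.QuasiMeasurePreserving (fun p : G × G => p.2 - p.1)
      ((μ.restrict s).prod (μ.restrict s)) μ :=
    ((quasiMeasurePreserving_sub μ μ).comp
      Measure.measurePreserving_swap.quasiMeasurePreserving).mono_left
      (Measure.restrict_le_self.absolutelyContinuous.prod
        Measure.restrict_le_self.absolutelyContinuous)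
  have hm := hg.aestronglyMeasurable.comp_quasiMeasurePreserving hsub
  refine (integrable_prod_iff hm).2
    ⟨ae_of_all _ fun x => (hg.comp_sub_right x).integrableOn, ?_⟩
  refine (integrable_const (∫ h, ‖g h‖ ∂μ)).mono' hm.norm.integral_prod_right'
    (ae_of_all _ fun x => ?_)
  rw [Real.norm_of_nonneg (integral_nonneg fun _ => norm_nonneg _)]
  exact integral_norm_comp_sub_restrict_le hg s x

end TranslationKernel

section LPS

variable {E : Type*} [NormedAddCommGroup E] [InnerProductSpace ℝ E]

theorem norm_inner_div_norm_sq_smul_le (h v : E) : ‖(⟪h, v⟫ / ‖h‖ ^ 2) • h‖ ≤ ‖v‖ := by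
  simpa [Submodule.starProjection_singleton] using (ℝ ∙ h).norm_starProjection_apply_le v

noncomputable def lpsDilatationForce (γ : ℝ → ℝ) (θ : E → ℝ) (p : E × E) : E :=
  (γ ‖p.2 - p.1‖ * (θ p.1 + θ p.2)) • (p.2 - p.1)

noncomputable def lpsBondForce (γ : ℝ → ℝ) (u : E → E) (p : E × E) : E :=
  (γ ‖p.2 - p.1‖ * (⟪p.2 - p.1, u p.2 - u p.1⟫ / ‖p.2 - p.1‖ ^ 2)) • (p.2 - p.1)

theorem lpsDilatationForce_swap (γ : ℝ → ℝ) (θ : E → ℝ) (p : E × E) :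
    lpsDilatationForce γ θ p.swap = -lpsDilatationForce γ θ p := by
  simp only [lpsDilatationForce, Prod.fst_swap, Prod.snd_swap, ← neg_sub p.2 p.1, norm_neg,
    smul_neg, add_comm]

theorem lpsBondForce_swap (γ : ℝ → ℝ) (u : E → E) (p : E × E) :
    lpsBondForce γ u p.swap = -lpsBondForce γ u p := by
  simp only [lpsBondForce, Prod.fst_swap, Prod.snd_swap, ← neg_sub p.2 p.1, ← neg_sub (u p.2),
    norm_neg, inner_neg_neg, smul_neg]

theorem inner_lpsDilatationForce (γ : ℝ → ℝ) (θ : E → ℝ) (p : E × E) (v : E) :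
    ⟪lpsDilatationForce γ θ p, v⟫ = (θ p.1 + θ p.2) * (γ ‖p.2 - p.1‖ * ⟪p.2 - p.1, v⟫) := by
  simp only [lpsDilatationForce, real_inner_smul_left]
  ring

theorem inner_lpsBondForce (γ : ℝ → ℝ) (u : E → E) (p : E × E) (v : E) :
    ⟪lpsBondForce γ u p, v⟫ =
      γ ‖p.2 - p.1‖ * (⟪u p.2 - u p.1, p.2 - p.1⟫ * ⟪v, p.2 - p.1⟫) / ‖p.2 - p.1‖ ^ 2 := by
  simp only [lpsBondForce, real_inner_smul_left, real_inner_comm (p.2 - p.1)]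
  ring

variable [MeasurableSpace E]

theorem integrable_lpsDilatationForce {ν : Measure E} [IsFiniteMeasure ν] {γ : ℝ → ℝ}
    (hκ : Integrable (fun p : E × E => γ ‖p.2 - p.1‖ • (p.2 - p.1)) (ν.prod ν))
    {θ : E → ℝ} (hθ : MemLp θ ⊤ ν) : Integrable (lpsDilatationForce γ θ) (ν.prod ν) := by
  refine (hκ.smul_of_top_right ((hθ.comp_fst ν).add (hθ.comp_snd ν))).congr
    (ae_of_all _ fun p => ?_)
  simp only [lpsDilatationForce, Pi.smul_apply', Pi.add_apply, smul_smul, mul_comm]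

variable [BorelSpace E] [SecondCountableTopology E]

theorem integrable_smul_self_of_eq_zero_of_le {μ : Measure E} {γ : ℝ → ℝ} {δ : ℝ}
    (hγ : Integrable (fun h : E => γ ‖h‖) μ) (hsupp : ∀ r, δ ≤ r → γ r = 0) :
    Integrable (fun h : E => γ ‖h‖ • h) μ := by
  refine (hγ.norm.const_mul δ).mono' (hγ.aestronglyMeasurable.smul aestronglyMeasurable_id)
    (ae_of_all _ fun h => ?_)
  rw [norm_smul, mul_comm δ]
  rcases le_or_gt δ ‖h‖ with hδh | hδh
  · simp [hsupp _ hδh]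
  · exact mul_le_mul_of_nonneg_left hδh.le (norm_nonneg _)

theorem memLp_top_integral_inner_comp_sub [CompleteSpace E] {μ : Measure E} [SFinite μ]
    [μ.IsAddLeftInvariant] [μ.IsAddRightInvariant] {g : E → E} (hg : Integrable g μ) {s : Set E}
    (hs : μ s ≠ ∞) {u : E → E} (hu : MemLp u ⊤ (μ.restrict s)) :
    MemLp (fun x => ∫ y, ⟪g (y - x), u y - u x⟫ ∂μ.restrict s) ⊤ (μ.restrict s) := by
  have : IsFiniteMeasure (μ.restrict s) := isFiniteMeasure_restrict.2 hs
  have hm : AEStronglyMeasurable (fun p : E × E => ⟪g (p.2 - p.1), u p.2 - u p.1⟫)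
      ((μ.restrict s).prod (μ.restrict s)) :=
    (integrable_comp_sub_prod_restrict hg hs).1.inner (hu.1.comp_snd.sub hu.1.comp_fst)
  set M := lpNorm u ∞ (μ.restrict s)
  refine memLp_top_of_bound hm.integral_prod_right' (2 * M * ∫ h, ‖g h‖ ∂μ) ?_
  have hM := ae_le_lpNorm_exponent_top hu
  filter_upwards [hM] with x hx
  have hbound : ∀ᵐ y ∂μ.restrict s, ‖⟪g (y - x), u y - u x⟫‖ ≤ 2 * M * ‖g (y - x)‖ := by
    filter_upwards [hM] with y hy
    calc ‖⟪g (y - x), u y - u x⟫‖ ≤ ‖g (y - x)‖ * ‖u y - u x‖ := norm_inner_le_norm _ _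
      _ ≤ ‖g (y - x)‖ * (2 * M) := by
          gcongr; exact (norm_sub_le _ _).trans (by linarith)
      _ = 2 * M * ‖g (y - x)‖ := mul_comm _ _
  calc ‖∫ y, ⟪g (y - x), u y - u x⟫ ∂μ.restrict s‖
      ≤ ∫ y, 2 * M * ‖g (y - x)‖ ∂μ.restrict s :=
        norm_integral_le_of_norm_le ((hg.comp_sub_right x).norm.integrableOn.const_mul _) hbound
    _ ≤ 2 * M * ∫ h, ‖g h‖ ∂μ := by
        rw [integral_const_mul]
        gcongr
        · exact mul_nonneg zero_le_two lpNorm_nonneg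
        · exact integral_norm_comp_sub_restrict_le hg s x

variable {ν : Measure E} [IsFiniteMeasure ν] {γ : ℝ → ℝ}

theorem integrable_lpsBondForce (hk : Integrable (fun p : E × E => γ ‖p.2 - p.1‖) (ν.prod ν))
    {u : E → E} (hu : MemLp u ⊤ ν) : Integrable (lpsBondForce γ u) (ν.prod ν) := by
  have hsub : Continuous fun p : E × E => p.2 - p.1 := by fun_prop
  have hud : MemLp (fun p : E × E => u p.2 - u p.1) ⊤ (ν.prod ν) :=
    (hu.comp_snd ν).sub (hu.comp_fst ν)
  have hproj : MemLp (fun p : E × E =>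
      (⟪p.2 - p.1, u p.2 - u p.1⟫ / ‖p.2 - p.1‖ ^ 2) • (p.2 - p.1)) ⊤ (ν.prod ν) :=
    hud.of_le ((((hsub.aestronglyMeasurable.inner hud.1).aemeasurable.div
      (hsub.norm.pow 2).aestronglyMeasurable.aemeasurable).aestronglyMeasurable).smul
        hsub.aestronglyMeasurable) (ae_of_all _ fun p => norm_inner_div_norm_sq_smul_le _ _)
  refine (hk.smul_of_top_left hproj).congr (ae_of_all _ fun p => ?_)
  simp only [lpsBondForce, Pi.smul_apply', smul_smul]

theorem integral_inner_lpsForce_eq [CompleteSpace E]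
    (hk : Integrable (fun p : E × E => γ ‖p.2 - p.1‖) (ν.prod ν))
    (hκ : Integrable (fun p : E × E => γ ‖p.2 - p.1‖ • (p.2 - p.1)) (ν.prod ν))
    {θ : E → ℝ} (hθ : MemLp θ ⊤ ν) {u z : E → E} (hu : MemLp u ⊤ ν) (hz : MemLp z ⊤ ν)
    (c₁ c₂ : ℝ) :
    ∫ x, ⟪c₁ • ∫ y, lpsDilatationForce γ θ (x, y) ∂ν + c₂ • ∫ y, lpsBondForce γ u (x, y) ∂ν,
        z x⟫ ∂ν =
      -(c₁ * ∫ x, θ x * ∫ y, γ ‖y - x‖ * ⟪y - x, z y - z x⟫ ∂ν ∂ν) -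
        c₂ / 2 * ∫ x, ∫ y, γ ‖y - x‖ * (⟪u y - u x, y - x⟫ * ⟪z y - z x, y - x⟫) /
          ‖y - x‖ ^ 2 ∂ν ∂ν := by
  have hA := integrable_lpsDilatationForce hκ hθ
  have hB := integrable_lpsBondForce hk hu
  have hzd : MemLp (fun p : E × E => z p.2 - z p.1) ⊤ (ν.prod ν) :=
    (hz.comp_snd ν).sub (hz.comp_fst ν)
  set T : E × E → E := fun p => c₁ • lpsDilatationForce γ θ p + c₂ • lpsBondForce γ u p
  have hTs : ∀ p, T p.swap = -T p := fun p => by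
    simp only [T, lpsDilatationForce_swap, lpsBondForce_swap, smul_neg, neg_add]
  have hforce : ∀ᵐ x ∂ν, c₁ • ∫ y, lpsDilatationForce γ θ (x, y) ∂ν +
      c₂ • ∫ y, lpsBondForce γ u (x, y) ∂ν = ∫ y, T (x, y) ∂ν := by
    filter_upwards [hA.prod_right_ae, hB.prod_right_ae] with x hAx hBx
    rw [← integral_smul, ← integral_smul]
    exact (integral_add (hAx.smul c₁) (hBx.smul c₂)).symm
  set S : E × E → ℝ := fun p => γ ‖p.2 - p.1‖ * ⟪p.2 - p.1, z p.2 - z p.1⟫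
  have hSs : ∀ p, S p.swap = S p := fun p => by
    simp only [S, Prod.fst_swap, Prod.snd_swap, ← neg_sub p.2 p.1, ← neg_sub (z p.2), norm_neg,
      inner_neg_neg]
  have hS : Integrable S (ν.prod ν) := by
    simpa only [real_inner_smul_left] using hκ.inner_of_top_right hzd
  have hTz : ∫ p, ⟪T p, z p.2 - z p.1⟫ ∂ν.prod ν = c₁ * ∫ p, (θ p.1 + θ p.2) * S p ∂ν.prod ν +
      c₂ * ∫ p, ⟪lpsBondForce γ u p, z p.2 - z p.1⟫ ∂ν.prod ν := by
    simp only [T, inner_add_left, real_inner_smul_left]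
    rw [integral_add ((hA.inner_of_top_right hzd).const_mul c₁)
      ((hB.inner_of_top_right hzd).const_mul c₂), integral_const_mul, integral_const_mul]
    simp only [inner_lpsDilatationForce, S]
  rw [integral_congr_ae (hforce.mono fun x hx => congrArg (⟪·, z x⟫) hx),
    integral_inner_integral_of_swap_eq_neg hTs ((hA.smul c₁).add (hB.smul c₂)) hz, hTz,
    integral_add_mul_of_swap_eq hSs (hS.mul_of_top_right (hθ.comp_fst ν)),
    integral_prod _ (hB.inner_of_top_right hzd)]
  simp only [inner_lpsBondForce]
  ring

end LPS

theorem lps_green_identity_general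
    (δ : ℝ) (lam mu : ℝ)
    (Ω ΩI : Set (EuclideanSpace ℝ (Fin 2)))
    (hfin : volume (Ω ∪ ΩI) < ⊤)
    (γ : ℝ → ℝ)
    (hγ_supp : ∀ r, δ ≤ r → γ r = 0)
    (hγ_int : Integrable (fun h : EuclideanSpace ℝ (Fin 2) => γ ‖h‖))
    (m : ℝ)
    (u z : EuclideanSpace ℝ (Fin 2) → EuclideanSpace ℝ (Fin 2))
    (hu_inf : MemLp u ⊤ (volume.restrict (Ω ∪ ΩI)))
    (hz_inf : MemLp z ⊤ (volume.restrict (Ω ∪ ΩI)))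
    (θ : EuclideanSpace ℝ (Fin 2) → ℝ)
    (hθ : ∀ p, θ p = (2 / m) * ∫ y in Ω ∪ ΩI, γ ‖y - p‖ * ⟪y - p, u y - u p⟫)
    (Lu : EuclideanSpace ℝ (Fin 2) → EuclideanSpace ℝ (Fin 2))
    (hLu : ∀ p, Lu p =
      ((2 * (lam - mu)) / m) • (∫ y in Ω ∪ ΩI, (γ ‖y - p‖ * (θ p + θ y)) • (y - p)) +
        ((16 * mu) / m) •
          (∫ y in Ω ∪ ΩI, (γ ‖y - p‖ * (⟪y - p, u y - u p⟫ / ‖y - p‖ ^ 2)) • (y - p)))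
    (Du Dz : EuclideanSpace ℝ (Fin 2) → ℝ)
    (hDu : ∀ p, Du p = ∫ y in Ω ∪ ΩI, γ ‖y - p‖ * ⟪y - p, u y - u p⟫)
    (hDz : ∀ p, Dz p = ∫ y in Ω ∪ ΩI, γ ‖y - p‖ * ⟪y - p, z y - z p⟫) :
    ((∫ x in Ω ∪ ΩI, ⟪-(Lu x), z x⟫) =
        (2 * 2 * (lam - mu) / m ^ 2) * (∫ x in Ω ∪ ΩI, Du x * Dz x) +
          (16 * mu / (2 * m)) * ∫ x in Ω ∪ ΩI, ∫ y in Ω ∪ ΩI,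
            γ ‖y - x‖ * (⟪u y - u x, y - x⟫ * ⟪z y - z x, y - x⟫) / ‖y - x‖ ^ 2) ∧
      ((∀ᵐ x ∂(volume.restrict ΩI), z x = 0) →
        (∫ x in Ω, ⟪-(Lu x), z x⟫) =
          (2 * 2 * (lam - mu) / m ^ 2) * (∫ x in Ω ∪ ΩI, Du x * Dz x) +
            (16 * mu / (2 * m)) * ∫ x in Ω ∪ ΩI, ∫ y in Ω ∪ ΩI,
              γ ‖y - x‖ * (⟪u y - u x, y - x⟫ * ⟪z y - z x, y - x⟫) / ‖y - x‖ ^ 2) := by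
  have hs : volume (Ω ∪ ΩI) ≠ ∞ := hfin.ne
  have : IsFiniteMeasure (volume.restrict (Ω ∪ ΩI)) := isFiniteMeasure_restrict.2 hs
  have hκ := integrable_smul_self_of_eq_zero_of_le hγ_int hγ_supp
  have hθ_mem : MemLp θ ⊤ (volume.restrict (Ω ∪ ΩI)) := by
    have hθ_eq : θ = fun p => 2 / m * ∫ y in Ω ∪ ΩI, ⟪γ ‖y - p‖ • (y - p), u y - u p⟫ := by
      simp only [real_inner_smul_left]; exact funext hθ
    rw [hθ_eq]
    exact (memLp_top_integral_inner_comp_sub hκ hs hu_inf).const_mul _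
  have hLu' : ∀ p, Lu p = (2 * (lam - mu) / m) • (∫ y in Ω ∪ ΩI, lpsDilatationForce γ θ (p, y)) +
      (16 * mu / m) • ∫ y in Ω ∪ ΩI, lpsBondForce γ u (p, y) := hLu
  have hfull : ∫ x in Ω ∪ ΩI, ⟪-(Lu x), z x⟫ =
      2 * 2 * (lam - mu) / m ^ 2 * (∫ x in Ω ∪ ΩI, Du x * Dz x) +
        16 * mu / (2 * m) * ∫ x in Ω ∪ ΩI, ∫ y in Ω ∪ ΩI,
          γ ‖y - x‖ * (⟪u y - u x, y - x⟫ * ⟪z y - z x, y - x⟫) / ‖y - x‖ ^ 2 := by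
    simp_rw [inner_neg_left, integral_neg, hLu']
    rw [integral_inner_lpsForce_eq (integrable_comp_sub_prod_restrict hγ_int hs)
      (integrable_comp_sub_prod_restrict hκ hs) hθ_mem hu_inf hz_inf]
    simp_rw [← hDz, hθ, ← hDu, mul_assoc (2 / m), integral_const_mul]
    ring
  refine ⟨hfull, fun hz0 => ?_⟩
  rw [← hfull, integral_union_eq_left_of_ae]
  filter_upwards [hz0] with x hx
  simp [hx]

/-- LPS first Green identity (eq. (2.11)): for essentially bounded `u, z ∈ L²(Ω̄; ℝ²)`,
`∫_{Ω̄} (−ℒ^{LPS}u)·z = a^{LPS}(u,z)`; in particular, for `z` vanishing a.e. on `Ω_I`,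
`∫_Ω (−ℒ^{LPS}u)·z = a^{LPS}(u,z)`. -/
theorem lps_green_identity
    (δ : ℝ) (hδ : 0 < δ) (lam mu : ℝ)
    (Ω ΩI : Set (EuclideanSpace ℝ (Fin 2)))
    (hΩ_open : IsOpen Ω) (hΩ_ne : Ω.Nonempty) (hΩ_bdd : Bornology.IsBounded Ω)
    (hΩI_sub : ΩI ⊆ Ωᶜ) (hΩI_meas : MeasurableSet ΩI)
    (hfin : volume (Ω ∪ ΩI) < ⊤)
    (γ : ℝ → ℝ) (hγ_meas : Measurable γ) (hγ_nonneg : ∀ r, 0 ≤ γ r)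
    (hγ_supp : ∀ r, δ ≤ r → γ r = 0)
    (hγ_int : Integrable (fun h : EuclideanSpace ℝ (Fin 2) => γ ‖h‖))
    (m : ℝ) (hm : 0 < m)
    (hm_def : (∫ h : EuclideanSpace ℝ (Fin 2), γ ‖h‖ * ‖h‖ ^ 2) = m)
    (u z : EuclideanSpace ℝ (Fin 2) → EuclideanSpace ℝ (Fin 2))
    (hu2 : MemLp u 2 (volume.restrict (Ω ∪ ΩI)))
    (hu_inf : MemLp u ⊤ (volume.restrict (Ω ∪ ΩI)))
    (hz2 : MemLp z 2 (volume.restrict (Ω ∪ ΩI)))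
    (hz_inf : MemLp z ⊤ (volume.restrict (Ω ∪ ΩI)))
    (θ : EuclideanSpace ℝ (Fin 2) → ℝ)
    (hθ : ∀ p, θ p = (2 / m) * ∫ y in Ω ∪ ΩI, γ ‖y - p‖ * ⟪y - p, u y - u p⟫)
    (Lu : EuclideanSpace ℝ (Fin 2) → EuclideanSpace ℝ (Fin 2))
    (hLu : ∀ p, Lu p =
      ((2 * (lam - mu)) / m) • (∫ y in Ω ∪ ΩI, (γ ‖y - p‖ * (θ p + θ y)) • (y - p)) +
        ((16 * mu) / m) •
          (∫ y in Ω ∪ ΩI, (γ ‖y - p‖ * (⟪y - p, u y - u p⟫ / ‖y - p‖ ^ 2)) • (y - p)))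
    (Du Dz : EuclideanSpace ℝ (Fin 2) → ℝ)
    (hDu : ∀ p, Du p = ∫ y in Ω ∪ ΩI, γ ‖y - p‖ * ⟪y - p, u y - u p⟫)
    (hDz : ∀ p, Dz p = ∫ y in Ω ∪ ΩI, γ ‖y - p‖ * ⟪y - p, z y - z p⟫) :
    ((∫ x in Ω ∪ ΩI, ⟪-(Lu x), z x⟫) =
        (2 * 2 * (lam - mu) / m ^ 2) * (∫ x in Ω ∪ ΩI, Du x * Dz x) +
          (16 * mu / (2 * m)) * ∫ x in Ω ∪ ΩI, ∫ y in Ω ∪ ΩI,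
            γ ‖y - x‖ * (⟪u y - u x, y - x⟫ * ⟪z y - z x, y - x⟫) / ‖y - x‖ ^ 2) ∧
      ((∀ᵐ x ∂(volume.restrict ΩI), z x = 0) →
        (∫ x in Ω, ⟪-(Lu x), z x⟫) =
          (2 * 2 * (lam - mu) / m ^ 2) * (∫ x in Ω ∪ ΩI, Du x * Dz x) +
            (16 * mu / (2 * m)) * ∫ x in Ω ∪ ΩI, ∫ y in Ω ∪ ΩI,
              γ ‖y - x‖ * (⟪u y - u x, y - x⟫ * ⟪z y - z x, y - x⟫) / ‖y - x‖ ^ 2) :=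
  lps_green_identity_general δ lam mu Ω ΩI hfin γ hγ_supp hγ_int m u z hu_inf hz_inf θ hθ Lu hLu Du
    Dz hDu hDz
end

section
/- (Equivalence of the LPS bilinear form and the LPS energy semi-norm.) Assume λ ≥ μ ≥ 0. Then for every essentially bounded u ∈ L²(Ω̄; ℝ²) the two-sided bound (C₂μ/2) · |||u|||²_{LPS} ≤ a^{LPS}(u, u) ≤ (2C₁(λ−μ) + C₂μ/2) · |||u|||²_{LPS} holds; in particular a^{LPS}(u,u) is equivalent to the squared LPS energy semi-norm. -/
/-!
The lower bound holds because the dilatation term of `a^{LPS}(u, u)` is nonnegative for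
`λ ≥ μ`. For the upper bound, write the dilatation as a weighted pairing,
`D_u(x) = ∫ γ(|y - x|) · |y - x| · ⟪u y - u x, y - x⟫ / |y - x| dy`, and apply Cauchy–Schwarz
with weight `γ(|y - x|)`: the first factor is at most the moment `m` by translation invariance,
the second is the inner integral of the energy semi-norm. Hence `D_u(x)² ≤ m · (energy density
at x)`, and integrating in `x` gives `∫ D_u² ≤ m² |||u|||²_{LPS}`. Essential boundedness of `u`
makes the energy density bounded, hence integrable over the finite-measure set `Ω ∪ Ω_I`.
-/

open MeasureTheory
open scoped RealInnerProductSpace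

theorem MeasureTheory.MemLp.exists_ae_norm_le {α F : Type*} [MeasurableSpace α]
    [NormedAddCommGroup F] {ν : Measure α} {f : α → F} (hf : MemLp f ⊤ ν) :
    ∃ C : ℝ, ∀ᵐ x ∂ν, ‖f x‖ ≤ C := by
  have hsup : eLpNormEssSup f ν < ⊤ := eLpNorm_exponent_top (f := f) ▸ hf.2
  obtain ⟨C, hC⟩ := eLpNormEssSup_lt_top_iff_isBoundedUnder.1 hsup
  exact ⟨C, (Filter.eventually_map.1 hC).mono fun x hx => NNReal.coe_le_coe.2 hx⟩

theorem setIntegral_comp_sub_right_le_integral {G : Type*} [AddGroup G] [MeasurableSpace G]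
    [MeasurableAdd G] {μ : Measure G} [μ.IsAddRightInvariant] {g : G → ℝ}
    (hg : Integrable g μ) (hg_nonneg : ∀ h, 0 ≤ g h) (S : Set G) (x : G) :
    ∫ y in S, g (y - x) ∂μ ≤ ∫ h, g h ∂μ :=
  (setIntegral_le_integral (hg.comp_sub_right x) (.of_forall fun _ => hg_nonneg _)).trans_eq
    (integral_sub_right_eq_self g x)

section CauchySchwarz

variable {α : Type*} [MeasurableSpace α] {μ : Measure α}

theorem sq_integral_mul_le_integral_sq_mul_integral_sq {f g : α → ℝ}
    (hf : MemLp f 2 μ) (hg : MemLp g 2 μ) :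
    (∫ a, f a * g a ∂μ) ^ 2 ≤ (∫ a, f a ^ 2 ∂μ) * ∫ a, g a ^ 2 ∂μ := by
  have hholder := integral_mul_norm_le_Lp_mul_Lq (μ := μ) Real.HolderConjugate.two_two
    (by simpa using hf) (by simpa using hg)
  simp only [Real.rpow_two, Real.norm_eq_abs, sq_abs, ← Real.sqrt_eq_rpow] at hholder
  have habs : |∫ a, f a * g a ∂μ| ≤ √(∫ a, f a ^ 2 ∂μ) * √(∫ a, g a ^ 2 ∂μ) :=
    calc |∫ a, f a * g a ∂μ| ≤ ∫ a, |f a * g a| ∂μ := abs_integral_le_integral_abs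
      _ = ∫ a, |f a| * |g a| ∂μ := by simp only [abs_mul]
      _ ≤ _ := hholder
  calc (∫ a, f a * g a ∂μ) ^ 2 = |∫ a, f a * g a ∂μ| ^ 2 := (sq_abs _).symm
    _ ≤ (√(∫ a, f a ^ 2 ∂μ) * √(∫ a, g a ^ 2 ∂μ)) ^ 2 := by gcongr
    _ = (∫ a, f a ^ 2 ∂μ) * ∫ a, g a ^ 2 ∂μ := by
      rw [mul_pow, Real.sq_sqrt (integral_nonneg fun a => sq_nonneg _),
        Real.sq_sqrt (integral_nonneg fun a => sq_nonneg _)]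

theorem sq_integral_weight_mul_le {w f g : α → ℝ} (hw : ∀ a, 0 ≤ w a)
    (hwm : AEStronglyMeasurable w μ) (hfm : AEStronglyMeasurable f μ)
    (hgm : AEStronglyMeasurable g μ) (hf : Integrable (fun a => w a * f a ^ 2) μ)
    (hg : Integrable (fun a => w a * g a ^ 2) μ) :
    (∫ a, w a * (f a * g a) ∂μ) ^ 2 ≤ (∫ a, w a * f a ^ 2 ∂μ) * ∫ a, w a * g a ^ 2 ∂μ := by
  have hsq : ∀ h : α → ℝ, ∀ a, (√(w a) * h a) ^ 2 = w a * h a ^ 2 := fun h a => by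
    rw [mul_pow, Real.sq_sqrt (hw a)]
  have hmem : ∀ h : α → ℝ, AEStronglyMeasurable h μ → Integrable (fun a => w a * h a ^ 2) μ →
      MemLp (fun a => √(w a) * h a) 2 μ := fun h hm hi =>
    (memLp_two_iff_integrable_sq ((Real.continuous_sqrt.comp_aestronglyMeasurable hwm).mul hm)).2
      (by simpa only [Pi.mul_apply, Function.comp_apply, hsq] using hi)
  have hweight : ∀ a, w a * (f a * g a) = √(w a) * f a * (√(w a) * g a) := fun a => by
    rw [mul_mul_mul_comm, Real.mul_self_sqrt (hw a)]
  simpa only [hsq, hweight] using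
    sq_integral_mul_le_integral_sq_mul_integral_sq (hmem f hfm hf) (hmem g hgm hg)

end CauchySchwarz

section LPS

variable {E : Type*} [NormedAddCommGroup E] [InnerProductSpace ℝ E]

theorem real_inner_sq_div_norm_sq_le (v w : E) : ⟪v, w⟫ ^ 2 / ‖w‖ ^ 2 ≤ ‖v‖ ^ 2 := by
  rcases eq_or_ne w 0 with rfl | hw
  · simp
  rw [div_le_iff₀ (by positivity), ← mul_pow, ← sq_abs]
  exact pow_le_pow_left₀ (abs_nonneg _) (abs_real_inner_le_norm v w) 2

variable {γ : ℝ → ℝ} {u : E → E}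

noncomputable def lpsEnergyIntegrand (γ : ℝ → ℝ) (u : E → E) (x y : E) : ℝ :=
  γ ‖y - x‖ * ⟪u y - u x, y - x⟫ ^ 2 / ‖y - x‖ ^ 2

theorem lpsEnergyIntegrand_nonneg (hγ : ∀ r, 0 ≤ γ r) (x y : E) :
    0 ≤ lpsEnergyIntegrand γ u x y := by
  unfold lpsEnergyIntegrand
  have := hγ ‖y - x‖
  positivity

theorem lpsEnergyIntegrand_le (hγ : ∀ r, 0 ≤ γ r) {x y : E} {a : ℝ}
    (hu : ‖u y - u x‖ ≤ a) : lpsEnergyIntegrand γ u x y ≤ a ^ 2 * γ ‖y - x‖ := by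
  have hsq : ‖u y - u x‖ ^ 2 ≤ a ^ 2 := pow_le_pow_left₀ (norm_nonneg _) hu 2
  calc lpsEnergyIntegrand γ u x y = γ ‖y - x‖ * (⟪u y - u x, y - x⟫ ^ 2 / ‖y - x‖ ^ 2) :=
        mul_div_assoc _ _ _
    _ ≤ γ ‖y - x‖ * a ^ 2 :=
        mul_le_mul_of_nonneg_left ((real_inner_sq_div_norm_sq_le _ _).trans hsq) (hγ _)
    _ = a ^ 2 * γ ‖y - x‖ := mul_comm _ _

variable [MeasurableSpace E] [BorelSpace E] {μ : Measure E} [μ.IsAddRightInvariant] {S : Set E}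

noncomputable def nonlocalDilatation (μ : Measure E) (S : Set E) (γ : ℝ → ℝ) (u : E → E)
    (x : E) : ℝ :=
  ∫ y in S, γ ‖y - x‖ * ⟪y - x, u y - u x⟫ ∂μ

theorem integral_lpsEnergyIntegrand_le (hγ_nonneg : ∀ r, 0 ≤ γ r)
    (hγ_int : Integrable (fun h => γ ‖h‖) μ) {x : E} {a : ℝ}
    (hbound : ∀ᵐ y ∂μ.restrict S, ‖u y - u x‖ ≤ a) :
    ∫ y in S, lpsEnergyIntegrand γ u x y ∂μ ≤ a ^ 2 * ∫ h, γ ‖h‖ ∂μ :=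
  calc ∫ y in S, lpsEnergyIntegrand γ u x y ∂μ ≤ ∫ y in S, a ^ 2 * γ ‖y - x‖ ∂μ :=
        integral_mono_of_nonneg (.of_forall (lpsEnergyIntegrand_nonneg hγ_nonneg x))
          (((hγ_int.comp_sub_right x).restrict).const_mul _)
          (hbound.mono fun y hy => lpsEnergyIntegrand_le hγ_nonneg hy)
    _ = a ^ 2 * ∫ y in S, γ ‖y - x‖ ∂μ := integral_const_mul _ _
    _ ≤ a ^ 2 * ∫ h, γ ‖h‖ ∂μ := by
        gcongr
        exact setIntegral_comp_sub_right_le_integral hγ_int (fun h => hγ_nonneg _) S x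

variable [SecondCountableTopology E]

theorem aestronglyMeasurable_lpsEnergyIntegrand {ν : Measure E} (hγ : Measurable γ)
    (hu : AEStronglyMeasurable u ν) (x : E) :
    AEStronglyMeasurable (lpsEnergyIntegrand γ u x) ν := by
  have hsub : Measurable fun y : E => y - x := measurable_id.sub_const x
  exact ((((hγ.comp hsub.norm).aestronglyMeasurable).mul
    (((hu.sub aestronglyMeasurable_const).inner hsub.aestronglyMeasurable).pow 2)).aemeasurable.div
      (hsub.norm.pow_const 2).aemeasurable).aestronglyMeasurable

theorem aestronglyMeasurable_uncurry_lpsEnergyIntegrand {ν : Measure E} (hγ : Measurable γ)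
    (hu : AEStronglyMeasurable u ν) :
    AEStronglyMeasurable (Function.uncurry (lpsEnergyIntegrand γ u)) (ν.prod ν) := by
  have hsub : Measurable fun z : E × E => z.2 - z.1 := measurable_snd.sub measurable_fst
  exact ((((hγ.comp hsub.norm).aestronglyMeasurable).mul
    (((hu.comp_snd.sub hu.comp_fst).inner hsub.aestronglyMeasurable).pow 2)).aemeasurable.div
      (hsub.norm.pow_const 2).aemeasurable).aestronglyMeasurable

theorem integrable_lpsEnergyIntegrand (hγ : Measurable γ) (hγ_nonneg : ∀ r, 0 ≤ γ r)
    (hγ_int : Integrable (fun h => γ ‖h‖) μ) (hu : AEStronglyMeasurable u (μ.restrict S))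
    {x : E} {a : ℝ} (hbound : ∀ᵐ y ∂μ.restrict S, ‖u y - u x‖ ≤ a) :
    Integrable (lpsEnergyIntegrand γ u x) (μ.restrict S) := by
  refine Integrable.mono' (((hγ_int.comp_sub_right x).restrict).const_mul (a ^ 2))
    (aestronglyMeasurable_lpsEnergyIntegrand hγ hu x) ?_
  filter_upwards [hbound] with y hy
  rw [Real.norm_of_nonneg (lpsEnergyIntegrand_nonneg hγ_nonneg x y)]
  exact lpsEnergyIntegrand_le hγ_nonneg hy

theorem integrable_integral_lpsEnergyIntegrand (hγ : Measurable γ) (hγ_nonneg : ∀ r, 0 ≤ γ r)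
    (hγ_int : Integrable (fun h => γ ‖h‖) μ) (hS : μ S ≠ ⊤) (hu : MemLp u ⊤ (μ.restrict S)) :
    Integrable (fun x => ∫ y in S, lpsEnergyIntegrand γ u x y ∂μ) (μ.restrict S) := by
  have : IsFiniteMeasure (μ.restrict S) := isFiniteMeasure_restrict.2 hS
  obtain ⟨C, hC⟩ := hu.exists_ae_norm_le
  refine Integrable.mono' (integrable_const ((C + C) ^ 2 * ∫ h, γ ‖h‖ ∂μ))
    (aestronglyMeasurable_uncurry_lpsEnergyIntegrand hγ hu.1).integral_prod_right' ?_
  filter_upwards [hC] with x hx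
  rw [Real.norm_of_nonneg (integral_nonneg (lpsEnergyIntegrand_nonneg hγ_nonneg x))]
  exact integral_lpsEnergyIntegrand_le hγ_nonneg hγ_int <| hC.mono fun y hy =>
    (norm_sub_le _ _).trans (add_le_add hy hx)

theorem sq_nonlocalDilatation_le (hγ : Measurable γ) (hγ_nonneg : ∀ r, 0 ≤ γ r)
    (hγ_moment : Integrable (fun h => γ ‖h‖ * ‖h‖ ^ 2) μ)
    (hu : AEStronglyMeasurable u (μ.restrict S)) {x : E}
    (hint : Integrable (lpsEnergyIntegrand γ u x) (μ.restrict S)) :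
    nonlocalDilatation μ S γ u x ^ 2 ≤
      (∫ h, γ ‖h‖ * ‖h‖ ^ 2 ∂μ) * ∫ y in S, lpsEnergyIntegrand γ u x y ∂μ := by
  have hsub : Measurable fun y : E => y - x := measurable_id.sub_const x
  have hweight : ∀ y, γ ‖y - x‖ * ⟪y - x, u y - u x⟫ =
      γ ‖y - x‖ * (‖y - x‖ * (⟪u y - u x, y - x⟫ / ‖y - x‖)) := fun y => by
    rcases eq_or_ne y x with rfl | hyx
    · simp
    rw [mul_div_cancel₀ _ (norm_ne_zero_iff.2 (sub_ne_zero.2 hyx)), real_inner_comm]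
  have hsq : ∀ y, γ ‖y - x‖ * (⟪u y - u x, y - x⟫ / ‖y - x‖) ^ 2 =
      lpsEnergyIntegrand γ u x y := fun y => by
    rw [div_pow, ← mul_div_assoc, lpsEnergyIntegrand]
  have hcs : (∫ y in S, γ ‖y - x‖ * (‖y - x‖ * (⟪u y - u x, y - x⟫ / ‖y - x‖)) ∂μ) ^ 2 ≤
      (∫ y in S, γ ‖y - x‖ * ‖y - x‖ ^ 2 ∂μ) *
        ∫ y in S, γ ‖y - x‖ * (⟪u y - u x, y - x⟫ / ‖y - x‖) ^ 2 ∂μ :=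
    sq_integral_weight_mul_le (fun y => hγ_nonneg ‖y - x‖)
      (hγ.comp hsub.norm).aestronglyMeasurable hsub.norm.aestronglyMeasurable
      (((hu.sub aestronglyMeasurable_const).inner hsub.aestronglyMeasurable).aemeasurable.div
        hsub.norm.aemeasurable).aestronglyMeasurable
      (hγ_moment.comp_sub_right x).restrict (hint.congr (.of_forall fun y => (hsq y).symm))
  simp only [hsq, ← hweight] at hcs
  calc nonlocalDilatation μ S γ u x ^ 2
      ≤ (∫ y in S, γ ‖y - x‖ * ‖y - x‖ ^ 2 ∂μ) * ∫ y in S, lpsEnergyIntegrand γ u x y ∂μ := hcs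
    _ ≤ (∫ h, γ ‖h‖ * ‖h‖ ^ 2 ∂μ) * ∫ y in S, lpsEnergyIntegrand γ u x y ∂μ := by
      gcongr
      · exact integral_nonneg (lpsEnergyIntegrand_nonneg hγ_nonneg x)
      · exact setIntegral_comp_sub_right_le_integral hγ_moment
          (fun h => mul_nonneg (hγ_nonneg _) (sq_nonneg _)) S x

theorem integral_sq_nonlocalDilatation_le (hγ : Measurable γ) (hγ_nonneg : ∀ r, 0 ≤ γ r)
    (hγ_int : Integrable (fun h => γ ‖h‖) μ)
    (hγ_moment : Integrable (fun h => γ ‖h‖ * ‖h‖ ^ 2) μ)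
    (hS : μ S ≠ ⊤) (hu : MemLp u ⊤ (μ.restrict S)) :
    ∫ x in S, nonlocalDilatation μ S γ u x ^ 2 ∂μ ≤
      (∫ h, γ ‖h‖ * ‖h‖ ^ 2 ∂μ) * ∫ x in S, ∫ y in S, lpsEnergyIntegrand γ u x y ∂μ ∂μ := by
  obtain ⟨C, hC⟩ := hu.exists_ae_norm_le
  have hint : ∀ x, Integrable (lpsEnergyIntegrand γ u x) (μ.restrict S) := fun x =>
    integrable_lpsEnergyIntegrand hγ hγ_nonneg hγ_int hu.1 <| hC.mono fun y hy =>
      (norm_sub_le _ _).trans (add_le_add hy le_rfl)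
  rw [← integral_const_mul]
  exact integral_mono_of_nonneg (.of_forall fun x => sq_nonneg _)
    ((integrable_integral_lpsEnergyIntegrand hγ hγ_nonneg hγ_int hS hu).const_mul _)
    (.of_forall fun x => sq_nonlocalDilatation_le hγ hγ_nonneg hγ_moment hu.1 (hint x))

end LPS

theorem lps_bilinear_form_energy_equivalence_general
    (lam mu : ℝ) (hlam : mu ≤ lam)
    (Ω ΩI : Set (EuclideanSpace ℝ (Fin 2)))
    (hfin : volume (Ω ∪ ΩI) < ⊤)
    (γ : ℝ → ℝ) (hγ_meas : Measurable γ) (hγ_nonneg : ∀ r, 0 ≤ γ r)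
    (hγ_int : Integrable (fun h : EuclideanSpace ℝ (Fin 2) => γ ‖h‖))
    (m : ℝ) (hm : 0 < m)
    (hm_def : (∫ h : EuclideanSpace ℝ (Fin 2), γ ‖h‖ * ‖h‖ ^ 2) = m)
    (u : EuclideanSpace ℝ (Fin 2) → EuclideanSpace ℝ (Fin 2))
    (hu_inf : MemLp u ⊤ (volume.restrict (Ω ∪ ΩI)))
    (Du : EuclideanSpace ℝ (Fin 2) → ℝ)
    (hDu : ∀ p, Du p = ∫ y in Ω ∪ ΩI, γ ‖y - p‖ * ⟪y - p, u y - u p⟫) :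
    (16 * mu / 2) *
        ((1 / m) * ∫ x in Ω ∪ ΩI, ∫ y in Ω ∪ ΩI,
          γ ‖y - x‖ * ⟪u y - u x, y - x⟫ ^ 2 / ‖y - x‖ ^ 2) ≤
      (2 * 2 * (lam - mu) / m ^ 2) * (∫ x in Ω ∪ ΩI, Du x * Du x) +
        (16 * mu / (2 * m)) * ∫ x in Ω ∪ ΩI, ∫ y in Ω ∪ ΩI,
          γ ‖y - x‖ * (⟪u y - u x, y - x⟫ * ⟪u y - u x, y - x⟫) / ‖y - x‖ ^ 2 ∧
    (2 * 2 * (lam - mu) / m ^ 2) * (∫ x in Ω ∪ ΩI, Du x * Du x) +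
        (16 * mu / (2 * m)) * ∫ x in Ω ∪ ΩI, ∫ y in Ω ∪ ΩI,
          γ ‖y - x‖ * (⟪u y - u x, y - x⟫ * ⟪u y - u x, y - x⟫) / ‖y - x‖ ^ 2 ≤
      (2 * 2 * (lam - mu) + 16 * mu / 2) *
        ((1 / m) * ∫ x in Ω ∪ ΩI, ∫ y in Ω ∪ ΩI,
          γ ‖y - x‖ * ⟪u y - u x, y - x⟫ ^ 2 / ‖y - x‖ ^ 2) := by
  set S := Ω ∪ ΩI
  -- a non-integrable function has Bochner integral `0`, so `m > 0` forces integrability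
  have hγ_moment : Integrable fun h : EuclideanSpace ℝ (Fin 2) => γ ‖h‖ * ‖h‖ ^ 2 :=
    Integrable.of_integral_ne_zero (hm_def ▸ hm.ne')
  set I := ∫ x in S, ∫ y in S, γ ‖y - x‖ * ⟪u y - u x, y - x⟫ ^ 2 / ‖y - x‖ ^ 2
  have hI : ∫ x in S, ∫ y in S,
      γ ‖y - x‖ * (⟪u y - u x, y - x⟫ * ⟪u y - u x, y - x⟫) / ‖y - x‖ ^ 2 = I := by
    simp only [I, ← sq]
  rw [hI]
  set J := ∫ x in S, Du x * Du x
  have hJ_le : J ≤ m * I := by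
    simp only [J, hDu, ← sq, ← hm_def]
    exact integral_sq_nonlocalDilatation_le hγ_meas hγ_nonneg hγ_int hγ_moment hfin.ne hu_inf
  have hJ_nonneg : 0 ≤ J := integral_nonneg fun x => mul_self_nonneg _
  have hcoeff_nonneg : 0 ≤ 2 * 2 * (lam - mu) / m ^ 2 := by
    have := sub_nonneg.2 hlam
    positivity
  have hfirst_le : 2 * 2 * (lam - mu) / m ^ 2 * J ≤ 2 * 2 * (lam - mu) * (1 / m * I) :=
    calc 2 * 2 * (lam - mu) / m ^ 2 * J ≤ 2 * 2 * (lam - mu) / m ^ 2 * (m * I) := by gcongr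
      _ = 2 * 2 * (lam - mu) * (1 / m * I) := by field_simp
  have hsecond : 16 * mu / (2 * m) * I = 16 * mu / 2 * (1 / m * I) := by ring
  constructor
  · linarith [mul_nonneg hcoeff_nonneg hJ_nonneg]
  · linarith

/-- Equivalence of the LPS bilinear form and the LPS energy semi-norm: for `λ ≥ μ ≥ 0`,
`(C₂μ/2)·|||u|||²_{LPS} ≤ a^{LPS}(u,u) ≤ (2C₁(λ−μ) + C₂μ/2)·|||u|||²_{LPS}`
with `C₁ = 2`, `C₂ = 16`. -/
theorem lps_bilinear_form_energy_equivalence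
    (δ : ℝ) (hδ : 0 < δ) (lam mu : ℝ) (hmu : 0 ≤ mu) (hlam : mu ≤ lam)
    (Ω ΩI : Set (EuclideanSpace ℝ (Fin 2)))
    (hΩ_open : IsOpen Ω) (hΩ_ne : Ω.Nonempty) (hΩ_bdd : Bornology.IsBounded Ω)
    (hΩI_sub : ΩI ⊆ Ωᶜ) (hΩI_meas : MeasurableSet ΩI)
    (hfin : volume (Ω ∪ ΩI) < ⊤)
    (γ : ℝ → ℝ) (hγ_meas : Measurable γ) (hγ_nonneg : ∀ r, 0 ≤ γ r)
    (hγ_supp : ∀ r, δ ≤ r → γ r = 0)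
    (hγ_int : Integrable (fun h : EuclideanSpace ℝ (Fin 2) => γ ‖h‖))
    (m : ℝ) (hm : 0 < m)
    (hm_def : (∫ h : EuclideanSpace ℝ (Fin 2), γ ‖h‖ * ‖h‖ ^ 2) = m)
    (u : EuclideanSpace ℝ (Fin 2) → EuclideanSpace ℝ (Fin 2))
    (hu2 : MemLp u 2 (volume.restrict (Ω ∪ ΩI)))
    (hu_inf : MemLp u ⊤ (volume.restrict (Ω ∪ ΩI)))
    (Du : EuclideanSpace ℝ (Fin 2) → ℝ)
    (hDu : ∀ p, Du p = ∫ y in Ω ∪ ΩI, γ ‖y - p‖ * ⟪y - p, u y - u p⟫) :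
    (16 * mu / 2) *
        ((1 / m) * ∫ x in Ω ∪ ΩI, ∫ y in Ω ∪ ΩI,
          γ ‖y - x‖ * ⟪u y - u x, y - x⟫ ^ 2 / ‖y - x‖ ^ 2) ≤
      (2 * 2 * (lam - mu) / m ^ 2) * (∫ x in Ω ∪ ΩI, Du x * Du x) +
        (16 * mu / (2 * m)) * ∫ x in Ω ∪ ΩI, ∫ y in Ω ∪ ΩI,
          γ ‖y - x‖ * (⟪u y - u x, y - x⟫ * ⟪u y - u x, y - x⟫) / ‖y - x‖ ^ 2 ∧
    (2 * 2 * (lam - mu) / m ^ 2) * (∫ x in Ω ∪ ΩI, Du x * Du x) +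
        (16 * mu / (2 * m)) * ∫ x in Ω ∪ ΩI, ∫ y in Ω ∪ ΩI,
          γ ‖y - x‖ * (⟪u y - u x, y - x⟫ * ⟪u y - u x, y - x⟫) / ‖y - x‖ ^ 2 ≤
      (2 * 2 * (lam - mu) + 16 * mu / 2) *
        ((1 / m) * ∫ x in Ω ∪ ΩI, ∫ y in Ω ∪ ΩI,
          γ ‖y - x‖ * ⟪u y - u x, y - x⟫ ^ 2 / ‖y - x‖ ^ 2) :=
  lps_bilinear_form_energy_equivalence_general lam mu hlam Ω ΩI hfin γ hγ_meas hγ_nonneg hγ_int m hm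
    hm_def u hu_inf Du hDu
end
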